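/- Let m be the measure on the Borel σ-algebra of ℝ^ℕ defined by m(A) = sup_k μ_k(A ∩ ℝ_I^k), where I = [−1/2,1/2], ℝ_I^k = {x ∈ ℝ^ℕ : x_i ∈ I for all i > k}, and μ_k is the product of k-dimensional Lebesgue measure on the first k coordinates with the countable product of uniform probability measures on I on the remaining coordinates. Then for x ∈ ℝ^ℕ, the translation invariance m(A − x) = m(A) holds for every Borel set A ⊆ ℝ^ℕ if and only if x ∈ ℓ^1, i.e. Σ_{i=1}^∞ |x_i| < ∞. -/

import Mathlib

open MeasureTheory
open scoped ENNReal

/-- The interval `I = [-1/2, 1/2]`. -/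
def Icube : Set ℝ := Set.Icc (-(1 / 2) : ℝ) (1 / 2)

/-- `ℝ_I^k`: the sequences whose coordinates beyond the first `k` lie in `I`. -/
def RIn (k : ℕ) : Set (ℕ → ℝ) := {x | ∀ i, k ≤ i → x i ∈ Icube}

/-- `μₖ` is the product of `k`-dimensional Lebesgue measure on the first `k`
coordinates with the countable product of copies of the uniform probability measure
on `I = [-1/2, 1/2]` (one-dimensional Lebesgue measure restricted to `I`) on the
remaining coordinates.  This is characterized (uniquely, by the π-system of
measurable cylinders together with the σ-finite exhaustion by cylinders with bounded
first `k` coordinates) by the product formula on measurable cylinders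
`{x | ∀ i < m, x i ∈ A i}` for `m ≥ k`. -/
def IsProdWithUniform (k : ℕ) (μk : Measure (ℕ → ℝ)) : Prop :=
  ∀ m : ℕ, k ≤ m → ∀ A : ℕ → Set ℝ, (∀ i, MeasurableSet (A i)) →
    μk {x | ∀ i, i < m → x i ∈ A i} =
      (∏ i ∈ Finset.range k, volume (A i)) * ∏ i ∈ Finset.Ico k m, volume (A i ∩ Icube)

/-- The set function `m(A) = sup_k μₖ(A ∩ ℝ_I^k)`. -/
noncomputable def mSup (μ : ℕ → Measure (ℕ → ℝ)) (A : Set (ℕ → ℝ)) : ℝ≥0∞ :=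
  ⨆ k, μ k (A ∩ RIn k)

/-!
Every `μₖ` is carried by `ℝ_I^k`, and for `j ≤ k` its restriction to `ℝ_I^j` is `μⱼ`; hence
`m(A) = supₖ μₖ(A)`, an increasing limit.

If `Σ |xᵢ| = ∞`, the translate `I^ℕ - x` meets each `μₖ` in measure at most
`∏_{i ≥ k} (1 - |xᵢ|)⁺ ≤ exp (-Σ_{i ≥ k} |xᵢ|) = 0`, whereas `m(I^ℕ) = 1`.

If `x ∈ ℓ¹`, `μₖ` is invariant under translations supported on the first `k` coordinates, while
translating one later coordinate by `t` changes the `μₖ`-measure of a set whose first `k`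
coordinates range over a box of volume `c` by at most `c |t|`. Translating the coordinates one at a
time and passing to the limit, which is possible for closed sets, gives
`μₖ(D) ≤ μₖ(D - x) + c Σ_{i ≥ k} |xᵢ|`; by inner regularity this yields `m(A) ≤ m(A - x)`, and
applying it to `-x` gives equality.
-/

open Set Filter Topology Function

section Cylinder

variable {α : Type*}

def cyl (m : ℕ) (A : ℕ → Set α) : Set (ℕ → α) := {x | ∀ i < m, x i ∈ A i}

theorem cyl_zero (A : ℕ → Set α) : cyl 0 A = univ :=
  eq_univ_of_forall fun _ i hi => absurd hi (Nat.not_lt_zero i)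

theorem cyl_inter_cyl (m : ℕ) (A B : ℕ → Set α) :
    cyl m A ∩ cyl m B = cyl m fun i => A i ∩ B i := by
  ext x
  simp only [cyl, mem_inter_iff, mem_ofPred_eq]
  exact ⟨fun h i hi => ⟨h.1 i hi, h.2 i hi⟩,
    fun h => ⟨fun i hi => (h i hi).1, fun i hi => (h i hi).2⟩⟩

theorem cyl_eq_cyl_ite {m M : ℕ} (h : m ≤ M) (A : ℕ → Set α) :
    cyl m A = cyl M fun i => if i < m then A i else univ := by
  ext x
  simp only [cyl, mem_ofPred_eq]
  refine ⟨fun hx i _ => ?_, fun hx i hi => ?_⟩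
  · split_ifs with hi
    exacts [hx i hi, trivial]
  · simpa [hi] using hx i (hi.trans_le h)

theorem preimage_eval_eq_cyl {i m : ℕ} (h : i < m) (S : Set α) :
    eval i ⁻¹' S = cyl m (update (fun _ => univ) i S) := by
  ext x
  simp only [cyl, mem_preimage, eval, mem_ofPred_eq]
  refine ⟨fun hx j _ => ?_, fun hx => by simpa using hx i h⟩
  rcases eq_or_ne j i with rfl | hj
  · simpa using hx
  · simp [hj]

theorem preimage_add_cyl [Add α] (s : ℕ → α) (m : ℕ) (A : ℕ → Set α) :
    (· + s) ⁻¹' cyl m A = cyl m fun i => (· + s i) ⁻¹' A i :=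
  rfl

theorem measurableSet_cyl [MeasurableSpace α] {m : ℕ} {A : ℕ → Set α}
    (hA : ∀ i, MeasurableSet (A i)) : MeasurableSet (cyl m A) :=
  MeasurableSet.pi (to_countable _) fun i _ => hA i

end Cylinder

theorem monotone_cyl_Icc (m : ℕ) : Monotone fun N : ℕ => cyl m fun _ => Icc (-(N : ℝ)) N :=
  fun _ _ hNM _ hx i hi => Icc_subset_Icc (by simpa using hNM) (by simpa using hNM) (hx i hi)

theorem iUnion_cyl_Icc (m : ℕ) : ⋃ N : ℕ, cyl m (fun _ => Icc (-(N : ℝ)) N) = univ := by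
  refine eq_univ_of_forall fun x => mem_iUnion.2 ?_
  obtain ⟨N, hN⟩ := exists_nat_ge (∑ i ∈ Finset.range m, |x i|)
  refine ⟨N, fun i hi => abs_le.1 ?_⟩
  exact (Finset.single_le_sum (fun j _ => abs_nonneg (x j)) (Finset.mem_range.2 hi)).trans hN

/-- `μ` is the product of the measures `ρ i`, seen through its marginals on cylinders of length
at least `k`; only the first `k` factors may have infinite mass. -/
def HasProdMarginals (ρ : ℕ → Measure ℝ) (k : ℕ) (μ : Measure (ℕ → ℝ)) : Prop :=
  ∀ m, k ≤ m → ∀ A : ℕ → Set ℝ, (∀ i, MeasurableSet (A i)) →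
    μ (cyl m A) = ∏ i ∈ Finset.range m, ρ i (A i)

namespace HasProdMarginals

variable {ρ : ℕ → Measure ℝ} {k : ℕ} {μ ν : Measure (ℕ → ℝ)}

theorem mono (h : HasProdMarginals ρ k μ) {k' : ℕ} (hk : k ≤ k') : HasProdMarginals ρ k' μ :=
  fun m hm => h m (hk.trans hm)

theorem ext [∀ i, IsLocallyFiniteMeasure (ρ i)] (hμ : HasProdMarginals ρ k μ)
    (hν : HasProdMarginals ρ k ν) : μ = ν := by
  let C : Set (Set (ℕ → ℝ)) :=
    {S | ∃ m, k ≤ m ∧ ∃ A : ℕ → Set ℝ, (∀ i, MeasurableSet (A i)) ∧ cyl m A = S}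
  have hmeas_ite : ∀ {m : ℕ} {A : ℕ → Set ℝ}, (∀ i, MeasurableSet (A i)) →
      ∀ i, MeasurableSet (if i < m then A i else univ) := fun hA i => by
    split_ifs
    exacts [hA i, .univ]
  refine Measure.ext_of_generateFrom_of_iUnion C (fun N => cyl k fun _ => Icc (-(N : ℝ)) N)
    ?_ ?_ (iUnion_cyl_Icc k) (fun N => ⟨k, le_rfl, _, fun _ => measurableSet_Icc, rfl⟩)
    (fun N => ?_) ?_
  · refine le_antisymm ?_ (MeasurableSpace.generateFrom_le ?_)
    · rw [MeasurableSpace.pi_eq_generateFrom_projections]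
      refine MeasurableSpace.generateFrom_mono ?_
      rintro _ ⟨i, S, hS, rfl⟩
      refine ⟨max k (i + 1), le_max_left _ _, _, fun j => ?_,
        (preimage_eval_eq_cyl (lt_max_of_lt_right i.lt_succ_self) S).symm⟩
      rcases eq_or_ne j i with rfl | hj
      · simpa using hS
      · simp [hj]
    · rintro _ ⟨m, -, A, hA, rfl⟩
      exact measurableSet_cyl hA
  · rintro _ ⟨m, hm, A, hA, rfl⟩ _ ⟨m', hm', A', hA', rfl⟩ -
    refine ⟨max m m', hm.trans (le_max_left _ _),
      fun i => (if i < m then A i else univ) ∩ (if i < m' then A' i else univ),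
      fun i => (hmeas_ite hA i).inter (hmeas_ite hA' i), ?_⟩
    rw [cyl_eq_cyl_ite (le_max_left m m') A, cyl_eq_cyl_ite (le_max_right m m') A', cyl_inter_cyl]
  · rw [hμ k le_rfl _ fun _ => measurableSet_Icc]
    exact ENNReal.prod_ne_top fun i _ => measure_Icc_lt_top.ne
  · rintro _ ⟨m, hm, A, hA, rfl⟩
    rw [hμ m hm A hA, hν m hm A hA]

theorem map_add (h : HasProdMarginals ρ k μ) (s : ℕ → ℝ) :
    HasProdMarginals (fun i => (ρ i).map (· + s i)) k (μ.map (· + s)) := by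
  intro m hm A hA
  rw [Measure.map_apply (measurable_add_const s) (measurableSet_cyl hA), preimage_add_cyl,
    h m hm _ fun i => measurable_add_const (s i) (hA i)]
  exact Finset.prod_congr rfl fun i _ => (Measure.map_apply (measurable_add_const _) (hA i)).symm

theorem restrict_preimage_eval (h : HasProdMarginals ρ k μ) (n : ℕ) {S : Set ℝ}
    (hS : MeasurableSet S) :
    HasProdMarginals (update ρ n ((ρ n).restrict S)) (max k (n + 1))
      (μ.restrict (eval n ⁻¹' S)) := by
  intro m hm A hA
  have hnm : n < m := (lt_max_of_lt_right n.lt_succ_self).trans_le hm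
  have hA' : ∀ i, MeasurableSet (A i ∩ update (fun _ => univ) n S i) := fun i =>
    (hA i).inter (by rcases eq_or_ne i n with rfl | hi <;> simp [*])
  rw [Measure.restrict_apply (measurableSet_cyl hA), preimage_eval_eq_cyl hnm, cyl_inter_cyl,
    h m ((le_max_left _ _).trans hm) _ hA']
  refine Finset.prod_congr rfl fun i _ => ?_
  rcases eq_or_ne i n with rfl | hi
  · simp [Measure.restrict_apply (hA i)]
  · simp [hi]

end HasProdMarginals

theorem measurableSet_Icube : MeasurableSet Icube := measurableSet_Icc

theorem volume_Icube : volume Icube = 1 := by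
  norm_num [Icube, Real.volume_Icc]

theorem map_add_const_volume_restrict {s : Set ℝ} (hs : MeasurableSet s) (t : ℝ) :
    (volume.restrict s).map (· + t) = volume.restrict ((· - t) ⁻¹' s) := by
  conv_rhs => rw [← map_add_right_eq_self volume t]
  rw [Measure.restrict_map (measurable_add_const t) (measurable_sub_const t hs)]
  congr 2
  ext
  simp

theorem volume_Icube_diff_preimage_sub_le (t : ℝ) :
    volume (Icube \ (· - t) ⁻¹' Icube) ≤ ENNReal.ofReal |t| := by
  rcases le_total 0 t with ht | ht
  · calc volume (Icube \ (· - t) ⁻¹' Icube) ≤ volume (Ico (-(1 / 2) : ℝ) (-(1 / 2) + t)) :=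
          measure_mono fun s hs => ⟨hs.1.1, by
            by_contra h
            exact hs.2 ⟨by linarith, by linarith [hs.1.2]⟩⟩
      _ = ENNReal.ofReal |t| := by rw [Real.volume_Ico, abs_of_nonneg ht]; ring_nf
  · calc volume (Icube \ (· - t) ⁻¹' Icube) ≤ volume (Ioc (1 / 2 + t : ℝ) (1 / 2)) :=
          measure_mono fun s hs => ⟨by
            by_contra h
            exact hs.2 ⟨by linarith [hs.1.1], by linarith⟩, hs.1.2⟩
      _ = ENNReal.ofReal |t| := by rw [Real.volume_Ioc, abs_of_nonpos ht]; ring_nf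

theorem volume_preimage_add_inter_Icube_le (t : ℝ) :
    volume ((· + t) ⁻¹' Icube ∩ Icube) ≤ ENNReal.ofReal (Real.exp (-|t|)) := by
  rw [Icube, preimage_add_const_Icc, Icc_inter_Icc, Real.volume_Icc]
  refine ENNReal.ofReal_le_ofReal ?_
  have hexp := Real.add_one_le_exp (-|t|)
  rcases le_total 0 t with ht | ht
  · rw [abs_of_nonneg ht] at hexp ⊢
    rw [min_eq_left (by linarith), max_eq_right (by linarith)]
    linarith
  · rw [abs_of_nonpos ht] at hexp ⊢
    rw [min_eq_right (by linarith), max_eq_left (by linarith)]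
    linarith

theorem IsClosed.le_measure_preimage_add_of_tendsto {G : Type*} [TopologicalSpace G] [Add G]
    [ContinuousAdd G] [MeasurableSpace G] [OpensMeasurableSpace G] {μ : Measure G} {D : Set G}
    (hD : IsClosed D) {s : ℕ → G} {x : G} (hs : Tendsto s atTop (𝓝 x))
    (hfin : μ (⋃ n, (· + s n) ⁻¹' D) ≠ ∞) {a : ℝ≥0∞} (ha : ∀ n, a ≤ μ ((· + s n) ⁻¹' D)) :
    a ≤ μ ((· + x) ⁻¹' D) := by
  let T : ℕ → Set G := fun q => ⋃ n ≥ q, (· + s n) ⁻¹' D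
  have hT_anti : Antitone T := fun q q' hqq' => biUnion_subset_biUnion_left fun n hn =>
    hqq'.trans hn
  have hT_meas : ∀ q, NullMeasurableSet (T q) μ := fun q =>
    (MeasurableSet.biUnion (to_countable _) fun n _ =>
      (hD.preimage (continuous_add_const (s n))).measurableSet).nullMeasurableSet
  have hT_fin : μ (T 0) ≠ ∞ := ne_top_of_le_ne_top hfin (measure_mono (by simp [T]))
  have hlimsup : ⋂ q, T q ⊆ (· + x) ⁻¹' D := fun y hy =>
    hD.mem_of_frequently_of_tendsto
      (frequently_atTop.2 fun q => by simpa [T] using mem_iInter.1 hy q)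
      (tendsto_const_nhds.add hs)
  have hT_ge : ∀ q, a ≤ μ (T q) := fun q =>
    (ha q).trans (measure_mono (subset_biUnion_of_mem (u := fun n => (· + s n) ⁻¹' D) (le_refl q)))
  calc a ≤ μ (⋂ q, T q) :=
        ge_of_tendsto' (tendsto_measure_iInter_atTop hT_meas hT_anti ⟨0, hT_fin⟩) hT_ge
    _ ≤ μ ((· + x) ⁻¹' D) := measure_mono hlimsup

theorem RIn_mono {j k : ℕ} (hjk : j ≤ k) : RIn j ⊆ RIn k :=
  fun _ hy i hi => hy i (hjk.trans hi)

theorem measurableSet_RIn (k : ℕ) : MeasurableSet (RIn k) := by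
  simp only [RIn, ofPred_forall]
  exact .iInter fun i => .iInter fun _ => measurableSet_Icube.preimage (measurable_pi_apply i)

def truncate {M : Type*} [Zero M] (n : ℕ) (x : ℕ → M) : ℕ → M := fun i => if i < n then x i else 0

theorem truncate_succ {M : Type*} [AddZeroClass M] (n : ℕ) (x : ℕ → M) :
    truncate (n + 1) x = truncate n x + Pi.single n (x n) := by
  funext i
  rcases lt_trichotomy i n with hi | rfl | hi
  · simp [truncate, hi, hi.ne, hi.trans n.lt_succ_self]
  · simp [truncate]
  · simp [truncate, hi.ne', not_lt.2 hi.le, not_lt.2 (Nat.succ_le_of_lt hi)]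

theorem tendsto_truncate {M : Type*} [Zero M] [TopologicalSpace M] (x : ℕ → M) :
    Tendsto (fun n => truncate n x) atTop (𝓝 x) :=
  tendsto_pi_nhds.2 fun i => tendsto_const_nhds.congr' <|
    (eventually_gt_atTop i).mono fun n hn => by simp [truncate, hn]

theorem preimage_add_truncate_subset {M : Type*} [AddZeroClass M] {k n : ℕ} (hkn : k ≤ n)
    {H : ℕ → Set M} {D : Set (ℕ → M)} (hDH : D ⊆ cyl k H) (x : ℕ → M) :
    (· + truncate n x) ⁻¹' D ⊆ (· + x) ⁻¹' cyl k H := fun y hy i hi => by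
  simpa [truncate, hi.trans_le hkn] using hDH hy i hi

noncomputable def prodFactor (k i : ℕ) : Measure ℝ :=
  if i < k then volume else volume.restrict Icube

instance (k i : ℕ) : IsLocallyFiniteMeasure (prodFactor k i) := by
  unfold prodFactor
  split_ifs <;> infer_instance

theorem prod_prodFactor {k m : ℕ} (hm : k ≤ m) {A : ℕ → Set ℝ} (hA : ∀ i, MeasurableSet (A i)) :
    ∏ i ∈ Finset.range m, prodFactor k i (A i) =
      (∏ i ∈ Finset.range k, volume (A i)) * ∏ i ∈ Finset.Ico k m, volume (A i ∩ Icube) := by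
  rw [← Finset.prod_range_mul_prod_Ico _ hm]
  congr 1 <;> refine Finset.prod_congr rfl fun i hi => ?_
  · simp [prodFactor, Finset.mem_range.1 hi]
  · simp [prodFactor, not_lt.2 (Finset.mem_Ico.1 hi).1, Measure.restrict_apply (hA i)]

theorem isProdWithUniform_iff {k : ℕ} {μ : Measure (ℕ → ℝ)} :
    IsProdWithUniform k μ ↔ HasProdMarginals (prodFactor k) k μ :=
  forall₂_congr fun _ hm => forall₂_congr fun _ hA => by rw [prod_prodFactor hm hA]; rfl

namespace IsProdWithUniform

variable {k : ℕ} {μ : Measure (ℕ → ℝ)}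

theorem hasProdMarginals (hμ : IsProdWithUniform k μ) : HasProdMarginals (prodFactor k) k μ :=
  isProdWithUniform_iff.1 hμ

theorem measure_cyl (hμ : IsProdWithUniform k μ) {A : ℕ → Set ℝ}
    (hA : ∀ i, MeasurableSet (A i)) : μ (cyl k A) = ∏ i ∈ Finset.range k, volume (A i) := by
  rw [hμ.hasProdMarginals k le_rfl A hA]
  exact Finset.prod_congr rfl fun i hi => by simp [prodFactor, Finset.mem_range.1 hi]

theorem measure_cyl_inter_preimage_eval (hμ : IsProdWithUniform k μ) {n : ℕ} (hn : k ≤ n)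
    {A : ℕ → Set ℝ} (hA : ∀ i, MeasurableSet (A i)) {S : Set ℝ} (hS : MeasurableSet S) :
    μ (cyl k A ∩ eval n ⁻¹' S) = μ (cyl k A) * volume (S ∩ Icube) := by
  have hB : ∀ i, MeasurableSet ((if i < k then A i else univ) ∩ update (fun _ => univ) n S i) :=
    fun i => by
      rcases eq_or_ne i n with rfl | hi
      · simpa [not_lt.2 hn] using hS
      · split_ifs <;> simp [hi, hA i]
  rw [hμ.measure_cyl hA, cyl_eq_cyl_ite (hn.trans n.le_succ), preimage_eval_eq_cyl n.lt_succ_self,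
    cyl_inter_cyl, hμ.hasProdMarginals _ (hn.trans n.le_succ) _ hB, Finset.prod_range_succ,
    ← Finset.prod_range_mul_prod_Ico _ hn]
  have hhead : ∀ i ∈ Finset.range k, prodFactor k i
      ((if i < k then A i else univ) ∩ update (fun _ => univ) n S i) = volume (A i) :=
    fun i hi => by
      have hi := Finset.mem_range.1 hi
      simp [prodFactor, hi, (hi.trans_le hn).ne]
  have htail : ∀ i ∈ Finset.Ico k n, prodFactor k i
      ((if i < k then A i else univ) ∩ update (fun _ => univ) n S i) = 1 := fun i hi => by
    simp [prodFactor, not_lt.2 (Finset.mem_Ico.1 hi).1, (Finset.mem_Ico.1 hi).2.ne, volume_Icube]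
  rw [Finset.prod_congr rfl hhead, Finset.prod_eq_one htail, mul_one]
  simp [prodFactor, not_lt.2 hn, Measure.restrict_apply hS]

theorem ae_mem_RIn (hμ : IsProdWithUniform k μ) : ∀ᵐ y ∂μ, y ∈ RIn k := by
  have hcoord : ∀ i, k ≤ i → ∀ᵐ y ∂μ, y i ∈ Icube := fun i hi => by
    have h := hμ.measure_cyl_inter_preimage_eval hi (fun _ => .univ) measurableSet_Icube.compl
    rw [compl_inter_self, measure_empty, mul_zero] at h
    refine ae_iff.2 (measure_mono_null ?_ h)
    exact fun y hy => ⟨fun _ _ => trivial, hy⟩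
  simpa [RIn, ae_all_iff] using hcoord

theorem measure_inter_RIn (hμ : IsProdWithUniform k μ) (S : Set (ℕ → ℝ)) :
    μ (S ∩ RIn k) = μ S :=
  measure_inter_conull hμ.ae_mem_RIn

theorem map_add_eq_self (hμ : IsProdWithUniform k μ) {s : ℕ → ℝ} (hs : ∀ i, k ≤ i → s i = 0) :
    μ.map (· + s) = μ := by
  have h := hμ.hasProdMarginals.map_add s
  have hfactor : (fun i => (prodFactor k i).map (· + s i)) = prodFactor k := by
    funext i
    by_cases hi : i < k
    · simp only [prodFactor, hi, if_true, map_add_right_eq_self]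
    · simp [hs i (not_lt.1 hi)]
  rw [hfactor] at h
  exact h.ext hμ.hasProdMarginals

theorem restrict_map_add_single (hμ : IsProdWithUniform k μ) {n : ℕ} (hn : k ≤ n) (t : ℝ) :
    (μ.map (· + (Pi.single n t : ℕ → ℝ))).restrict (eval n ⁻¹' (Icube ∩ (· - t) ⁻¹' Icube)) =
      μ.restrict (eval n ⁻¹' (Icube ∩ (· - t) ⁻¹' Icube)) := by
  set E := Icube ∩ (· - t) ⁻¹' Icube
  have hE : MeasurableSet E :=
    measurableSet_Icube.inter (measurable_sub_const t measurableSet_Icube)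
  -- On both sides the `n`-th factor becomes Lebesgue measure on `E = I ∩ (I + t)`.
  have hfactor : update (fun i => (prodFactor k i).map (· + (Pi.single n t : ℕ → ℝ) i)) n
      (((prodFactor k n).map (· + (Pi.single n t : ℕ → ℝ) n)).restrict E) =
      update (prodFactor k) n ((prodFactor k n).restrict E) := by
    funext i
    rcases eq_or_ne i n with rfl | hi
    · simp only [update_self, Pi.single_eq_same, prodFactor, if_neg (not_lt.2 hn),
        map_add_const_volume_restrict measurableSet_Icube, Measure.restrict_restrict hE]
      rw [inter_eq_left.2 inter_subset_right, inter_eq_left.2 inter_subset_left]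
    · simp [hi]
  have hshift := (hμ.hasProdMarginals.map_add (Pi.single n t)).restrict_preimage_eval n hE
  rw [hfactor] at hshift
  have : ∀ i, IsLocallyFiniteMeasure (update (prodFactor k) n ((prodFactor k n).restrict E) i) :=
    fun i => by
      rcases eq_or_ne i n with rfl | hi
      · rw [update_self]; infer_instance
      · rw [update_of_ne hi]; infer_instance
  exact hshift.ext (hμ.hasProdMarginals.restrict_preimage_eval n hE)

theorem restrict_RIn_of_succ {μ' : Measure (ℕ → ℝ)} (hμ : IsProdWithUniform k μ)
    (hμ' : IsProdWithUniform (k + 1) μ') : μ'.restrict (RIn k) = μ := by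
  have hRIn : RIn k = eval k ⁻¹' Icube ∩ RIn (k + 1) := by
    ext y
    simp only [RIn, mem_ofPred_eq, mem_inter_iff, mem_preimage, eval]
    refine ⟨fun h => ⟨h k le_rfl, fun i hi => h i (k.le_succ.trans hi)⟩, fun h i hi => ?_⟩
    rcases hi.eq_or_lt with rfl | hi
    exacts [h.1, h.2 i hi]
  have hfactor : update (prodFactor (k + 1)) k ((prodFactor (k + 1) k).restrict Icube) =
      prodFactor k := by
    funext i
    rcases lt_trichotomy i k with hi | rfl | hi
    · simp [prodFactor, hi.ne, hi, hi.trans k.lt_succ_self]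
    · simp [prodFactor]
    · simp [prodFactor, hi.ne', not_lt.2 hi.le, not_lt.2 (Nat.succ_le_of_lt hi)]
  have h := hμ'.hasProdMarginals.restrict_preimage_eval k measurableSet_Icube
  rw [hfactor, max_self] at h
  rw [hRIn, Measure.restrict_congr_set (inter_ae_eq_left_of_ae_eq_univ
    ((ae_eq_univ (s := RIn (k + 1))).2 hμ'.ae_mem_RIn))]
  exact h.ext (hμ.hasProdMarginals.mono k.le_succ)

theorem measure_preimage_add_cyl (hμ : IsProdWithUniform k μ) {H : ℕ → Set ℝ}
    (hH : ∀ i, MeasurableSet (H i)) (x : ℕ → ℝ) : μ ((· + x) ⁻¹' cyl k H) = μ (cyl k H) := by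
  rw [preimage_add_cyl, hμ.measure_cyl hH, hμ.measure_cyl fun i => measurable_add_const _ (hH i)]
  simp_rw [measure_preimage_add_right]

theorem measure_le_measure_preimage_add_single (hμ : IsProdWithUniform k μ) {H : ℕ → Set ℝ}
    (hH : ∀ i, MeasurableSet (H i)) {x : ℕ → ℝ} {C : Set (ℕ → ℝ)} (hC : MeasurableSet C)
    (hCH : C ⊆ (· + x) ⁻¹' cyl k H) {n : ℕ} (hn : k ≤ n) (t : ℝ) :
    μ C ≤ μ ((· + (Pi.single n t : ℕ → ℝ)) ⁻¹' C) + μ (cyl k H) * ENNReal.ofReal |t| := by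
  have hE : MeasurableSet (eval n ⁻¹' (Icube ∩ (· - t) ⁻¹' Icube) : Set (ℕ → ℝ)) :=
    (measurableSet_Icube.inter (measurable_sub_const t measurableSet_Icube)).preimage
      (measurable_pi_apply n)
  have hS : MeasurableSet (Icube \ (· - t) ⁻¹' Icube) :=
    measurableSet_Icube.diff (measurable_sub_const t measurableSet_Icube)
  have hmain : μ (C ∩ eval n ⁻¹' (Icube ∩ (· - t) ⁻¹' Icube)) ≤
      μ ((· + (Pi.single n t : ℕ → ℝ)) ⁻¹' C) := by
    rw [← Measure.restrict_apply' hE, ← hμ.restrict_map_add_single hn t,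
      Measure.restrict_apply' hE, Measure.map_apply (measurable_add_const _) (hC.inter hE)]
    exact measure_mono (preimage_mono inter_subset_left)
  have herr : μ (C \ eval n ⁻¹' (Icube ∩ (· - t) ⁻¹' Icube)) ≤
      μ (cyl k H) * ENNReal.ofReal |t| :=
    calc _ ≤ μ ((· + x) ⁻¹' cyl k H ∩ eval n ⁻¹' (Icube \ (· - t) ⁻¹' Icube)) := by
          rw [← hμ.measure_inter_RIn]
          exact measure_mono fun y ⟨⟨hyC, hyE⟩, hyR⟩ =>
            ⟨hCH hyC, hyR n hn, fun h => hyE ⟨hyR n hn, h⟩⟩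
      _ = μ (cyl k H) * volume ((Icube \ (· - t) ⁻¹' Icube) ∩ Icube) := by
          rw [preimage_add_cyl, hμ.measure_cyl_inter_preimage_eval hn
            (fun i => measurable_add_const _ (hH i)) hS, ← preimage_add_cyl,
            hμ.measure_preimage_add_cyl hH]
      _ ≤ μ (cyl k H) * ENNReal.ofReal |t| := by
          gcongr
          exact (measure_mono inter_subset_left).trans (volume_Icube_diff_preimage_sub_le t)
  exact (measure_le_inter_add_sdiff μ C _).trans (add_le_add hmain herr)

theorem measure_le_measure_preimage_add_truncate (hμ : IsProdWithUniform k μ)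
    {H : ℕ → Set ℝ} (hH : ∀ i, MeasurableSet (H i)) {D : Set (ℕ → ℝ)} (hD : MeasurableSet D)
    (hDH : D ⊆ cyl k H) (x : ℕ → ℝ) (n : ℕ) :
    μ D ≤ μ ((· + truncate (n + k) x) ⁻¹' D) +
      μ (cyl k H) * ∑ i ∈ Finset.range n, ENNReal.ofReal |x (i + k)| := by
  induction n with
  | zero =>
    rw [zero_add, Finset.sum_range_zero, mul_zero, add_zero,
      ← Measure.map_apply (measurable_add_const _) hD, hμ.map_add_eq_self]
    exact fun i hi => by simp [truncate, not_lt.2 hi]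
  | succ n ih =>
    have hshift : (· + (Pi.single (n + k) (x (n + k)) : ℕ → ℝ)) ⁻¹'
        ((· + truncate (n + k) x) ⁻¹' D) = (· + truncate (n + 1 + k) x) ⁻¹' D := by
      ext y
      rw [Nat.add_right_comm, truncate_succ, mem_preimage, mem_preimage, mem_preimage, add_assoc,
        add_comm (Pi.single _ _)]
    have hstep := hμ.measure_le_measure_preimage_add_single hH
      (measurable_add_const (truncate (n + k) x) hD)
      (preimage_add_truncate_subset (Nat.le_add_left k n) hDH x) (Nat.le_add_left k n) (x (n + k))
    rw [hshift] at hstep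
    calc μ D ≤ μ ((· + truncate (n + k) x) ⁻¹' D) +
          μ (cyl k H) * ∑ i ∈ Finset.range n, ENNReal.ofReal |x (i + k)| := ih
      _ ≤ μ ((· + truncate (n + 1 + k) x) ⁻¹' D) + μ (cyl k H) * ENNReal.ofReal |x (n + k)| +
          μ (cyl k H) * ∑ i ∈ Finset.range n, ENNReal.ofReal |x (i + k)| := by gcongr
      _ = _ := by rw [Finset.sum_range_succ, mul_add, add_assoc, add_comm (_ * ENNReal.ofReal _)]

theorem measure_le_measure_preimage_add (hμ : IsProdWithUniform k μ) {H : ℕ → Set ℝ}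
    (hH : ∀ i, MeasurableSet (H i)) (hHfin : μ (cyl k H) ≠ ∞) {D : Set (ℕ → ℝ)} (hD : IsClosed D)
    (hDH : D ⊆ cyl k H) (x : ℕ → ℝ) :
    μ D ≤ μ ((· + x) ⁻¹' D) + μ (cyl k H) * ∑' i, ENNReal.ofReal |x (i + k)| := by
  have hfin : μ (⋃ n, (· + truncate (n + k) x) ⁻¹' D) ≠ ∞ :=
    ne_top_of_le_ne_top (hμ.measure_preimage_add_cyl hH x ▸ hHfin) <| measure_mono <|
      iUnion_subset fun n => preimage_add_truncate_subset (Nat.le_add_left k n) hDH x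
  have hlim := hD.le_measure_preimage_add_of_tendsto (s := fun n => truncate (n + k) x)
    ((tendsto_truncate x).comp (tendsto_add_atTop_nat k)) hfin
      (a := μ D - μ (cyl k H) * ∑' i, ENNReal.ofReal |x (i + k)|) fun n =>
      tsub_le_iff_right.2 <| (hμ.measure_le_measure_preimage_add_truncate hH hD.measurableSet
        hDH x n).trans (by gcongr; exact ENNReal.sum_le_tsum _)
  exact tsub_le_iff_right.1 hlim

theorem measure_cyl_Icc_Icube (hμ : IsProdWithUniform k μ) {j : ℕ} (hjk : j ≤ k) (N : ℝ) :
    μ (cyl k fun i => if i < j then Icc (-N) N else Icube) = ENNReal.ofReal (2 * N) ^ j := by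
  have hhead : ∀ i ∈ Finset.range j,
      volume (if i < j then Icc (-N) N else Icube) = ENNReal.ofReal (2 * N) := fun i hi => by
    rw [if_pos (Finset.mem_range.1 hi), Real.volume_Icc]
    ring_nf
  have htail : ∀ i ∈ Finset.Ico j k, volume (if i < j then Icc (-N) N else Icube) = 1 :=
    fun i hi => by rw [if_neg (not_lt.2 (Finset.mem_Ico.1 hi).1), volume_Icube]
  rw [hμ.measure_cyl fun i => by split_ifs; exacts [measurableSet_Icc, measurableSet_Icube],
    ← Finset.prod_range_mul_prod_Ico _ hjk, Finset.prod_congr rfl hhead, Finset.prod_eq_one htail,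
    Finset.prod_const, Finset.card_range, mul_one]

theorem measure_preimage_add_RIn_zero_le (hμ : IsProdWithUniform k μ) (x : ℕ → ℝ) (p : ℕ) :
    μ ((· + x) ⁻¹' RIn 0) ≤ ENNReal.ofReal (Real.exp (-∑ i ∈ Finset.range p, |x (i + k)|)) := by
  have hA : ∀ i, MeasurableSet ((· + x i) ⁻¹' Icube) := fun i =>
    measurable_add_const _ measurableSet_Icube
  calc μ ((· + x) ⁻¹' RIn 0) ≤ μ (cyl (k + p) fun i => (· + x i) ⁻¹' Icube) :=
        measure_mono fun y hy i _ => hy i (Nat.zero_le i)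
    _ = ∏ i ∈ Finset.range p, volume ((· + x (i + k)) ⁻¹' Icube ∩ Icube) := by
        rw [hμ.hasProdMarginals _ (Nat.le_add_right k p) _ hA,
          prod_prodFactor (Nat.le_add_right k p) hA, Finset.prod_Ico_eq_prod_range,
          Nat.add_sub_cancel_left]
        simp [measure_preimage_add_right, volume_Icube, add_comm k]
    _ ≤ ∏ i ∈ Finset.range p, ENNReal.ofReal (Real.exp (-|x (i + k)|)) :=
        Finset.prod_le_prod' fun i _ => volume_preimage_add_inter_Icube_le _
    _ = ENNReal.ofReal (Real.exp (-∑ i ∈ Finset.range p, |x (i + k)|)) := by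
        rw [← Finset.sum_neg_distrib, Real.exp_sum,
          ENNReal.ofReal_prod_of_nonneg fun i _ => (Real.exp_pos _).le]

end IsProdWithUniform

section mSup

variable {μ : ℕ → Measure (ℕ → ℝ)}

theorem restrict_RIn_eq (hμ : ∀ k, IsProdWithUniform k (μ k)) {j k : ℕ} (hjk : j ≤ k) :
    (μ k).restrict (RIn j) = μ j := by
  induction k, hjk using Nat.le_induction with
  | base => exact Measure.restrict_eq_self_of_ae_mem (hμ j).ae_mem_RIn
  | succ k hjk ih =>
    rw [← Measure.restrict_restrict_of_subset (RIn_mono hjk),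
      (hμ k).restrict_RIn_of_succ (hμ (k + 1)), ih]

theorem mSup_eq_iSup (hμ : ∀ k, IsProdWithUniform k (μ k)) (A : Set (ℕ → ℝ)) :
    mSup μ A = ⨆ k, μ k A :=
  iSup_congr fun k => (hμ k).measure_inter_RIn A

theorem measure_eq_of_subset_RIn (hμ : ∀ k, IsProdWithUniform k (μ k)) {j k : ℕ} (hjk : j ≤ k)
    {S : Set (ℕ → ℝ)} (hS : S ⊆ RIn j) : μ k S = μ j S := by
  rw [← restrict_RIn_eq hμ hjk, Measure.restrict_eq_self _ hS]

theorem mSup_RIn_zero (hμ : ∀ k, IsProdWithUniform k (μ k)) : mSup μ (RIn 0) = 1 := by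
  have h : ∀ k, μ k (RIn 0) = 1 := fun k => by
    rw [measure_eq_of_subset_RIn hμ (Nat.zero_le k) subset_rfl, ← univ_inter (RIn 0),
      (hμ 0).measure_inter_RIn, ← cyl_zero fun _ => univ, (hμ 0).measure_cyl fun _ => .univ,
      Finset.prod_range_zero]
  simp [mSup_eq_iSup hμ, h]

theorem mSup_preimage_add_RIn_zero (hμ : ∀ k, IsProdWithUniform k (μ k)) {x : ℕ → ℝ}
    (hx : ¬Summable fun i => |x i|) : mSup μ ((· + x) ⁻¹' RIn 0) = 0 := by
  refine (mSup_eq_iSup hμ _).trans (ENNReal.iSup_eq_zero.2 fun k => ?_)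
  have hdiv : Tendsto (fun p => ∑ i ∈ Finset.range p, |x (i + k)|) atTop atTop :=
    (not_summable_iff_tendsto_nat_atTop_of_nonneg fun i => abs_nonneg _).1
      ((summable_nat_add_iff (f := fun i => |x i|) k).not.2 hx)
  have hzero : Tendsto (fun p => ENNReal.ofReal (Real.exp (-∑ i ∈ Finset.range p, |x (i + k)|)))
      atTop (𝓝 0) := by
    have h := ENNReal.tendsto_ofReal (Real.tendsto_exp_neg_atTop_nhds_zero.comp hdiv)
    rwa [ENNReal.ofReal_zero] at h
  exact nonpos_iff_eq_zero.1 (ge_of_tendsto' hzero ((hμ k).measure_preimage_add_RIn_zero_le x))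

theorem le_iSup_measure_preimage_add_of_isClosed (hμ : ∀ k, IsProdWithUniform k (μ k))
    {x : ℕ → ℝ} (hx : Summable fun i => |x i|) {j : ℕ} {N : ℝ} {D : Set (ℕ → ℝ)} (hD : IsClosed D)
    (hDj : D ⊆ RIn j) (hDN : D ⊆ cyl j fun _ => Icc (-N) N) :
    μ j D ≤ ⨆ k, μ k ((· + x) ⁻¹' D) := by
  let H : ℕ → Set ℝ := fun i => if i < j then Icc (-N) N else Icube
  have hH : ∀ i, MeasurableSet (H i) := fun i => by
    dsimp only [H]
    split_ifs
    exacts [measurableSet_Icc, measurableSet_Icube]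
  have hDH : ∀ k, j ≤ k → D ⊆ cyl k H := fun k hjk y hy i _ => by
    dsimp only [H]
    split_ifs with hij
    exacts [hDN hy i hij, hDj hy i (not_lt.1 hij)]
  have hsum : ∑' i, ENNReal.ofReal |x i| ≠ ∞ := by
    rw [← ENNReal.ofReal_tsum_of_nonneg (fun i => abs_nonneg _) hx]
    exact ENNReal.ofReal_ne_top
  have htail : Tendsto (fun k => ENNReal.ofReal (2 * N) ^ j * ∑' i, ENNReal.ofReal |x (i + k)|)
      atTop (𝓝 0) := by
    have h := ENNReal.Tendsto.const_mul (a := ENNReal.ofReal (2 * N) ^ j)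
      (ENNReal.tendsto_sum_nat_add _ hsum) (Or.inr (ENNReal.pow_ne_top ENNReal.ofReal_ne_top))
    rwa [mul_zero] at h
  refine ENNReal.le_of_forall_pos_le_add fun ε hε _ => ?_
  obtain ⟨k, hk, hjk⟩ :=
    ((htail.eventually (gt_mem_nhds (ENNReal.coe_pos.2 hε))).and (eventually_ge_atTop j)).exists
  have hfin : μ k (cyl k H) ≠ ∞ := by
    rw [(hμ k).measure_cyl_Icc_Icube hjk]
    exact ENNReal.pow_ne_top ENNReal.ofReal_ne_top
  calc μ j D = μ k D := (measure_eq_of_subset_RIn hμ hjk hDj).symm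
    _ ≤ μ k ((· + x) ⁻¹' D) + μ k (cyl k H) * ∑' i, ENNReal.ofReal |x (i + k)| :=
      (hμ k).measure_le_measure_preimage_add hH hfin hD (hDH k hjk) x
    _ ≤ (⨆ k, μ k ((· + x) ⁻¹' D)) + ε := by
      rw [(hμ k).measure_cyl_Icc_Icube hjk]
      exact add_le_add (le_iSup (fun k => μ k ((· + x) ⁻¹' D)) k) hk.le

theorem mSup_le_mSup_preimage_add (hμ : ∀ k, IsProdWithUniform k (μ k)) {x : ℕ → ℝ}
    (hx : Summable fun i => |x i|) {A : Set (ℕ → ℝ)} (hA : MeasurableSet A) :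
    mSup μ A ≤ mSup μ ((· + x) ⁻¹' A) := by
  rw [mSup_eq_iSup hμ ((· + x) ⁻¹' A)]
  refine iSup_le fun j => le_of_forall_lt fun a ha => ?_
  rw [← inter_univ (A ∩ RIn j), ← iUnion_cyl_Icc j, inter_iUnion,
    (monotone_const.inter (monotone_cyl_Icc j)).measure_iUnion, lt_iSup_iff] at ha
  obtain ⟨N, hN⟩ := ha
  have hB : MeasurableSet (A ∩ RIn j ∩ cyl j fun _ => Icc (-(N : ℝ)) N) :=
    (hA.inter (measurableSet_RIn j)).inter (measurableSet_cyl fun _ => measurableSet_Icc)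
  have : IsFiniteMeasure ((μ j).restrict (cyl j fun _ => Icc (-(N : ℝ)) N)) := by
    refine ⟨?_⟩
    rw [Measure.restrict_apply_univ, (hμ j).measure_cyl fun _ => measurableSet_Icc]
    exact ENNReal.prod_lt_top fun i _ => measure_Icc_lt_top
  rw [← Measure.restrict_eq_self (μ j) inter_subset_right] at hN
  obtain ⟨K, hKB, hK, haK⟩ := hB.exists_lt_isClosed_of_ne_top (measure_ne_top _ _) hN
  rw [Measure.restrict_eq_self _ (hKB.trans inter_subset_right)] at haK
  calc a < μ j K := haK
    _ ≤ ⨆ k, μ k ((· + x) ⁻¹' K) := le_iSup_measure_preimage_add_of_isClosed hμ hx hK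
        (fun y hy => (hKB hy).1.2) (fun y hy => (hKB hy).2)
    _ ≤ ⨆ k, μ k ((· + x) ⁻¹' A) :=
        iSup_mono fun k => measure_mono (preimage_mono fun y hy => (hKB hy).1.1)

end mSup

/-- for `x ∈ ℝ^ℕ`, the measure `m(A) = sup_k μₖ(A ∩ ℝ_I^k)` satisfies
`m(A - x) = m(A)` for every Borel set `A` if and only if `x ∈ ℓ¹`, i.e.
`Σ_i |x_i| < ∞`. -/
theorem mSup_translation_invariant_iff_ell_one
    (μ : ℕ → Measure (ℕ → ℝ)) (hμ : ∀ k, IsProdWithUniform k (μ k)) (x : ℕ → ℝ) :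
    (∀ A : Set (ℕ → ℝ), MeasurableSet A →
      mSup μ ((fun y => y - x) '' A) = mSup μ A) ↔ Summable fun i => |x i| := by
  simp only [image_sub_right]
  constructor
  · intro h
    by_contra hx
    have h₀ := h (RIn 0) (measurableSet_RIn 0)
    rw [mSup_preimage_add_RIn_zero hμ hx, mSup_RIn_zero hμ] at h₀
    exact zero_ne_one h₀
  · intro hx A hA
    refine le_antisymm ?_ (mSup_le_mSup_preimage_add hμ hx hA)
    simpa [preimage_preimage] using
      mSup_le_mSup_preimage_add hμ (x := -x) (by simpa using hx) (measurable_add_const x hA)
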